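/- arXiv:2412.13290 — 2 statements merged into one kernel-verified Lean document; each statement's English description precedes it below -/
import Mathlib

section
/- Fix G, costs c'_i, set C, and threshold β as in the pseudo-core definition. Consider the greedy algorithm that, starting from S̄ = S, repeatedly picks i ∈ S̄ \ C minimizing deg_{S̄}(i)(deg_{S̄}(i)+1)/c'_i and removes it if this value is less than β, stopping otherwise. The output of this algorithm equals the unique β-pseudo-core of S (the maximal subset T ⊆ S with deg_T(i)(deg_T(i)+1)/c'_i ≥ β for all i ∈ T \ C). -/
/-!
Keys only grow with the vertex set. A vertex removed by the greedy algorithm has key below `β`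
in the current set, which (inductively) contains every `T' ⊆ S` whose non-`C` members all have
key at least `β` in `T'`; hence the removed vertex cannot lie in such a `T'`, and every such `T'`
survives to the end. When the run stops, the minimal key over `T \ C` is at least `β`, so `T`
itself is such a set.
-/

open Finset

namespace Stmt6

variable {V : Type*} [Fintype V] [DecidableEq V]

/-- Inner degree of `i` in `T`. -/
def degIn (G : SimpleGraph V) [DecidableRel G.Adj] (T : Finset V) (i : V) : ℕ :=
  (G.neighborFinset i ∩ T).card

/-- The greedy key: `deg_T(i)(deg_T(i)+1)/c'_i`. -/
noncomputable def key (G : SimpleGraph V) [DecidableRel G.Adj]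
    (c' : V → ℝ) (T : Finset V) (i : V) : ℝ :=
  ((degIn G T i : ℝ) * ((degIn G T i : ℝ) + 1)) / c' i

/-- One step of the greedy pseudo-core algorithm: remove a minimizer of the key
among `S̄ \ C` whose key is below `β`. -/
def GreedyStep (G : SimpleGraph V) [DecidableRel G.Adj]
    (c' : V → ℝ) (C : Finset V) (β : ℝ) (S T : Finset V) : Prop :=
  ∃ v ∈ S \ C, (∀ w ∈ S \ C, key G c' S v ≤ key G c' S w) ∧
    key G c' S v < β ∧ T = S.erase v

section

variable (G : SimpleGraph V) [DecidableRel G.Adj]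

lemma degIn_mono {T T' : Finset V} (h : T' ⊆ T) (i : V) : degIn G T' i ≤ degIn G T i :=
  card_le_card (inter_subset_inter le_rfl h)

lemma key_mono (c' : V → ℝ) {T T' : Finset V} (h : T' ⊆ T) {i : V} (hci : 0 < c' i) :
    key G c' T' i ≤ key G c' T i := by
  have hdeg : (degIn G T' i : ℝ) ≤ degIn G T i := by exact_mod_cast degIn_mono G h i
  unfold key
  gcongr

variable (c' : V → ℝ) (C : Finset V) (β : ℝ)

lemma subset_of_reflTransGen_greedyStep {S T : Finset V}
    (hrun : Relation.ReflTransGen (GreedyStep G c' C β) S T) : T ⊆ S := by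
  induction hrun with
  | refl => exact Subset.refl S
  | tail _ hstep ih =>
    obtain ⟨v, -, -, -, rfl⟩ := hstep
    exact (erase_subset _ _).trans ih

lemma le_key_of_forall_not_greedyStep {T : Finset V}
    (hterm : ∀ T', ¬ GreedyStep G c' C β T T') : ∀ i ∈ T \ C, key G c' T i ≥ β := by
  intro i hi
  by_contra! hlt
  obtain ⟨v, hv, hmin⟩ := exists_min_image (T \ C) (key G c' T) ⟨i, hi⟩
  exact hterm (T.erase v) ⟨v, hv, hmin, (hmin i hi).trans_lt hlt, rfl⟩

lemma subset_of_reflTransGen_greedyStep_of_le_key (hc : ∀ i, i ∉ C → 0 < c' i)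
    {S T T' : Finset V} (hrun : Relation.ReflTransGen (GreedyStep G c' C β) S T)
    (hT'S : T' ⊆ S) (hT' : ∀ i ∈ T' \ C, key G c' T' i ≥ β) : T' ⊆ T := by
  induction hrun with
  | refl => exact hT'S
  | @tail U _ _ hstep ih =>
    obtain ⟨v, hv, -, hvβ, rfl⟩ := hstep
    intro x hx
    refine mem_erase.2 ⟨?_, ih hx⟩
    rintro rfl
    have hxC : x ∉ C := (mem_sdiff.1 hv).2
    have hβle : β ≤ key G c' U x :=
      (hT' x (mem_sdiff.2 ⟨hx, hxC⟩)).trans (key_mono G c' ih (hc x hxC))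
    exact hvβ.not_ge hβle

end

theorem stmt6_general (G : SimpleGraph V) [DecidableRel G.Adj]
    (c' : V → ℝ) (C : Finset V) (β : ℝ)
    (hc : ∀ i, i ∉ C → 0 < c' i) (S T : Finset V)
    (hrun : Relation.ReflTransGen (GreedyStep G c' C β) S T)
    (hterm : ∀ T', ¬ GreedyStep G c' C β T T') :
    (T ⊆ S ∧ ∀ i ∈ T \ C, key G c' T i ≥ β) ∧
    ∀ T' ⊆ S, (∀ i ∈ T' \ C, key G c' T' i ≥ β) → T' ⊆ T :=
  ⟨⟨subset_of_reflTransGen_greedyStep G c' C β hrun,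
      le_key_of_forall_not_greedyStep G c' C β hterm⟩,
    fun _ hT'S hT' => subset_of_reflTransGen_greedyStep_of_le_key G c' C β hc hrun hT'S hT'⟩

/-- If the greedy algorithm, run from `S`, terminates at `T` (no further step is
possible), then `T` is the unique maximal subset of `S` all of whose non-`C`
members satisfy `deg_T(i)(deg_T(i)+1)/c'_i ≥ β`, i.e. the β-pseudo-core of `S`. -/
theorem stmt6 (G : SimpleGraph V) [DecidableRel G.Adj]
    (c' : V → ℝ) (C : Finset V) (β : ℝ) (hβ : 0 < β)
    (hc : ∀ i, i ∉ C → 0 < c' i) (S T : Finset V)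
    (hrun : Relation.ReflTransGen (GreedyStep G c' C β) S T)
    (hterm : ∀ T', ¬ GreedyStep G c' C β T T') :
    (T ⊆ S ∧ ∀ i ∈ T \ C, key G c' T i ≥ β) ∧
    ∀ T' ⊆ S, (∀ i ∈ T' \ C, key G c' T' i ≥ β) → T' ⊆ T :=
  stmt6_general G c' C β hc S T hrun hterm

end Stmt6
end

section
/- Let G = (V, E) be a finite simple graph, S ⊆ V finite, C ⊆ V, and costs c_i ≥ 0. Define 𝓛(S) := 1 − ∑_{i ∈ S \ C} c_i/(deg_S(i) + 1). Suppose v ∈ S \ C attains the minimum of deg_S(i)(deg_S(i)+1)/c_i over i ∈ S \ C with c_i > 0, and deg_S(v) ≥ 1. Then 𝓛(S \ {v}) ≥ 𝓛(S). -/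
/-!
Removing `v` from `S` drops the term `c_v/(deg_S(v)+1)` and raises the term of each neighbour
`i ∈ S \ C` of `v` from `c_i/(deg_S(i)+1)` to `c_i/deg_S(i)`, i.e. by `c_i/(deg_S(i)(deg_S(i)+1))`.
By the minimality of `v` each such increase is at most `c_v/(deg_S(v)(deg_S(v)+1))`, and there are
at most `deg_S(v)` of them, so together they do not exceed the dropped term.
-/

open Finset

lemma div_le_div_add_one_add_of_le {c c' d d' : ℝ} (hc' : 0 < c') (hd' : 0 < d') (hd : 0 < d)
    (hmin : 0 < c → d' * (d' + 1) / c' ≤ d * (d + 1) / c) :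
    c / d ≤ c / (d + 1) + c' / (d' * (d' + 1)) := by
  have hsplit : c / d = c / (d + 1) + c / (d * (d + 1)) := by
    field_simp
  rw [hsplit]
  refine add_le_add_right ?_ _
  rcases le_or_gt c 0 with hc | hc
  · exact (div_nonpos_of_nonpos_of_nonneg hc (by positivity)).trans (by positivity)
  · rw [← one_div_div (d' * (d' + 1)) c', ← one_div_div (d * (d + 1)) c]
    exact one_div_le_one_div_of_le (by positivity) (hmin hc)

namespace SimpleGraph

variable {V : Type*} [Fintype V] [DecidableEq V] (G : SimpleGraph V) [DecidableRel G.Adj]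

lemma card_neighborFinset_inter_erase_add_one {S : Finset V} {i v : V} (hadj : G.Adj i v)
    (hv : v ∈ S) : #(G.neighborFinset i ∩ S.erase v) + 1 = #(G.neighborFinset i ∩ S) := by
  rw [inter_erase, card_erase_add_one]
  simp [hadj, hv]

lemma neighborFinset_inter_erase_of_not_adj {S : Finset V} {i v : V} (hadj : ¬G.Adj i v) :
    G.neighborFinset i ∩ S.erase v = G.neighborFinset i ∩ S := by
  rw [inter_erase, erase_eq_of_notMem]
  simp [hadj]

lemma div_card_neighborFinset_inter_erase_le (c : V → ℝ) {S : Finset V} {i v : V}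
    (hi : i ∈ S) (hv : v ∈ S) (hcv : 0 < c v)
    (hmin : 0 < c i →
      (#(G.neighborFinset v ∩ S) : ℝ) * (#(G.neighborFinset v ∩ S) + 1) / c v
        ≤ (#(G.neighborFinset i ∩ S) : ℝ) * (#(G.neighborFinset i ∩ S) + 1) / c i) :
    c i / ((#(G.neighborFinset i ∩ S.erase v) : ℝ) + 1)
      ≤ c i / ((#(G.neighborFinset i ∩ S) : ℝ) + 1) +
        if G.Adj v i then
          c v / ((#(G.neighborFinset v ∩ S) : ℝ) * (#(G.neighborFinset v ∩ S) + 1))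
        else 0 := by
  by_cases hadj : G.Adj v i
  · have hcard : (#(G.neighborFinset i ∩ S.erase v) : ℝ) + 1 = #(G.neighborFinset i ∩ S) := by
      exact_mod_cast G.card_neighborFinset_inter_erase_add_one hadj.symm hv
    have hdi : (0 : ℝ) < #(G.neighborFinset i ∩ S) := by
      rw [← hcard]
      positivity
    have hdv : (0 : ℝ) < #(G.neighborFinset v ∩ S) := by
      exact_mod_cast card_pos.mpr ⟨i, by simp [hadj, hi]⟩
    rw [hcard, if_pos hadj]
    exact div_le_div_add_one_add_of_le hcv hdv hdi hmin
  · rw [G.neighborFinset_inter_erase_of_not_adj (fun h ↦ hadj h.symm), if_neg hadj, add_zero]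

lemma sum_ite_adj_le {S T : Finset V} (hT : T ⊆ S) {v : V} {x : ℝ} (hx : 0 ≤ x) :
    ∑ i ∈ T, (if G.Adj v i then x else 0) ≤ #(G.neighborFinset v ∩ S) * x := by
  rw [← sum_filter, sum_const, nsmul_eq_mul]
  gcongr
  intro i hi
  obtain ⟨hiT, hadj⟩ := mem_filter.mp hi
  simp [hadj, hT hiT]

end SimpleGraph

theorem stmt7_general {V : Type*} [Fintype V] [DecidableEq V]
    (G : SimpleGraph V) [DecidableRel G.Adj]
    (S C : Finset V) (c : V → ℝ)
    (v : V) (hv : v ∈ S \ C) (hcv : 0 < c v)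
    (hmin : ∀ i ∈ S \ C, 0 < c i →
      ((G.neighborFinset v ∩ S).card : ℝ) * ((G.neighborFinset v ∩ S).card + 1) / c v
        ≤ ((G.neighborFinset i ∩ S).card : ℝ) * ((G.neighborFinset i ∩ S).card + 1) / c i) :
    1 - ∑ i ∈ (S.erase v) \ C, c i / (((G.neighborFinset i ∩ S.erase v).card : ℝ) + 1)
      ≥ 1 - ∑ i ∈ S \ C, c i / (((G.neighborFinset i ∩ S).card : ℝ) + 1) := by
  set dv : ℝ := (#(G.neighborFinset v ∩ S) : ℝ)
  have hvS : v ∈ S := (mem_sdiff.mp hv).1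
  have hT : (S \ C).erase v ⊆ S := (erase_subset _ _).trans sdiff_subset
  have hgain : dv * (c v / (dv * (dv + 1))) ≤ c v / (dv + 1) := by
    rcases eq_or_ne dv 0 with h0 | h0
    · simp [h0, hcv.le]
    · rw [mul_div_assoc', mul_div_mul_left _ _ h0]
  rw [erase_sdiff_comm, ← add_sum_erase _ _ hv, ge_iff_le, sub_le_sub_iff_left]
  calc ∑ i ∈ (S \ C).erase v, c i / ((#(G.neighborFinset i ∩ S.erase v) : ℝ) + 1)
      ≤ ∑ i ∈ (S \ C).erase v, (c i / ((#(G.neighborFinset i ∩ S) : ℝ) + 1) +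
          if G.Adj v i then c v / (dv * (dv + 1)) else 0) :=
        sum_le_sum fun i hi ↦ G.div_card_neighborFinset_inter_erase_le c (hT hi) hvS hcv
          (hmin i (mem_of_mem_erase hi))
    _ ≤ ∑ i ∈ (S \ C).erase v, c i / ((#(G.neighborFinset i ∩ S) : ℝ) + 1) + c v / (dv + 1) := by
        rw [sum_add_distrib]
        gcongr
        exact (G.sum_ite_adj_le hT (by positivity)).trans hgain
    _ = _ := add_comm _ _

/-- Removing a minimizer `v` of `deg_S(i)(deg_S(i)+1)/c_i` (over `i ∈ S \ C` with
`c_i > 0`, with `deg_S(v) ≥ 1`) does not decrease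
`𝓛(S) = 1 − ∑_{i ∈ S\C} c_i/(deg_S(i)+1)`. -/
theorem stmt7 {V : Type*} [Fintype V] [DecidableEq V]
    (G : SimpleGraph V) [DecidableRel G.Adj]
    (S C : Finset V) (c : V → ℝ) (hc : ∀ i, 0 ≤ c i)
    (v : V) (hv : v ∈ S \ C) (hcv : 0 < c v)
    (hdeg : 1 ≤ (G.neighborFinset v ∩ S).card)
    (hmin : ∀ i ∈ S \ C, 0 < c i →
      ((G.neighborFinset v ∩ S).card : ℝ) * ((G.neighborFinset v ∩ S).card + 1) / c v
        ≤ ((G.neighborFinset i ∩ S).card : ℝ) * ((G.neighborFinset i ∩ S).card + 1) / c i) :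
    1 - ∑ i ∈ (S.erase v) \ C, c i / (((G.neighborFinset i ∩ S.erase v).card : ℝ) + 1)
      ≥ 1 - ∑ i ∈ S \ C, c i / (((G.neighborFinset i ∩ S).card : ℝ) + 1) :=
  stmt7_general G S C c v hv hcv hmin
end
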